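/- arXiv:2506.06577 — 2 statements merged into one kernel-verified Lean document; each statement's English description precedes it below -/
import Mathlib

section
/- (Full Polytope Symmetry, part 2) Let σ be any permutation of the 2m qubits commuting with the antipodal involution (σ ∘ τ = τ ∘ σ), and let P_σ be the induced permutation operator sending |x⟩ to |x ∘ σ⁻¹⟩. Then P_σ preserves the code space of the X–I code Ξ(2m); in fact P_σ fixes both codewords: P_σ |0̄⟩ = |0̄⟩ and P_σ |1̄⟩ = |1̄⟩. -/
open scoped BigOperators

/-- Bit strings on `2m` qubits. -/
abbrev Bits (m : ℕ) := Fin (2*m) → ZMod 2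

/-- The `2m`-qubit Hilbert space, as functions from computational basis labels to `ℂ`. -/
abbrev QState (m : ℕ) := Bits m → ℂ

/-- Indicator bit string of a finite set of qubits. -/
def indSet (m : ℕ) (S : Finset (Fin (2*m))) : Bits m := fun i => if i ∈ S then 1 else 0

/-- The Pauli-X operator on the set `S`: sends `|x⟩` to `|x + 1_S⟩`. -/
def Xop (m : ℕ) (S : Finset (Fin (2*m))) : QState m →ₗ[ℂ] QState m where
  toFun v := fun x => v (x + indSet m S)
  map_add' _ _ := rfl
  map_smul' _ _ := rfl

/-- The Pauli-Z operator on the set `S`: sends `|x⟩` to `(-1)^{∑_{i∈S} x i} |x⟩`. -/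
def Zop (m : ℕ) (S : Finset (Fin (2*m))) : QState m →ₗ[ℂ] QState m where
  toFun v := fun x => ((-1 : ℂ) ^ (∑ i ∈ S, (x i).val)) * v x
  map_add' u v := by funext x; simp [mul_add]
  map_smul' c v := by funext x; simp; ring

/-- The antipodal involution `τ i = i + m (mod 2m)`. -/
def tau (m : ℕ) (i : Fin (2*m)) : Fin (2*m) :=
  ⟨(i.val + m) % (2*m), Nat.mod_lt _ (by have := i.isLt; omega)⟩

/-- The computational basis state `|x⟩`. -/
def ket (m : ℕ) (x : Bits m) : QState m := fun y => if y = x then 1 else 0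

/-- The pair-equal bit string determined by `b : Fin m → ZMod 2`. -/
def xb (m : ℕ) (b : Fin m → ZMod 2) : Bits m :=
  fun i => b ⟨i.val % m, Nat.mod_lt _ (by have := i.isLt; omega)⟩

/-- The logical codeword `|0̄⟩` of the X–I code `Ξ(2m)`. -/
noncomputable def ket0 (m : ℕ) : QState m :=
  ((Real.sqrt (2 ^ (m-1)) : ℂ))⁻¹ •
    ∑ b ∈ Finset.univ.filter (fun b : Fin m → ZMod 2 => ∑ i, b i = 0), ket m (xb m b)

/-- The logical codeword `|1̄⟩` of the X–I code `Ξ(2m)`. -/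
noncomputable def ket1 (m : ℕ) : QState m :=
  ((Real.sqrt (2 ^ (m-1)) : ℂ))⁻¹ •
    ∑ b ∈ Finset.univ.filter (fun b : Fin m → ZMod 2 => ∑ i, b i = 1), ket m (xb m b)

/-- The permutation operator `P_σ` induced by a permutation `σ` of the qubits:
it sends `|x⟩` to `|x ∘ σ⁻¹⟩`. -/
def Pperm (m : ℕ) (σ : Equiv.Perm (Fin (2*m))) : QState m →ₗ[ℂ] QState m where
  toFun v := fun y => v (y ∘ σ)
  map_add' _ _ := rfl
  map_smul' _ _ := rfl

/-!
Since `σ` commutes with `τ`, it permutes the antipodal pairs `{i, τ i}`; the induced permutation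
`ρ` of `Fin m` satisfies `x_b ∘ σ⁻¹ = x_{b ∘ ρ}`. As `b ↦ b ∘ ρ` preserves the parity `∑ b_i`,
`P_σ` merely reindexes the sums defining `|0̄⟩` and `|1̄⟩`, and fixing both codewords it is the
identity on the code space.
-/

theorem Function.Surjective.exists_perm_comp_eq {α β : Type*} [Finite β] {f : α → β}
    (hf : f.Surjective) (σ : Equiv.Perm α) (hσ : ∀ a a', f (σ a) = f (σ a') ↔ f a = f a') :
    ∃ ρ : Equiv.Perm β, f ∘ σ = ρ ∘ f := by
  set ρ : β → β := fun y => f (σ (Function.surjInv hf y))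
  have hρ : f ∘ σ = ρ ∘ f := by
    funext a
    exact ((hσ _ _).mpr (Function.surjInv_eq hf (f a))).symm
  have hinj : ρ.Injective := fun y y' h => by
    simpa only [Function.surjInv_eq hf] using (hσ _ _).mp h
  exact ⟨Equiv.ofBijective ρ (Finite.injective_iff_bijective.mp hinj), hρ⟩

/-- The antipodal pair `{i, τ i}` of the qubit `i`, labelled by `i mod m`. -/
def antipodalClass (m : ℕ) (i : Fin (2*m)) : Fin m :=
  ⟨i.val % m, Nat.mod_lt _ (by have := i.isLt; omega)⟩

theorem xb_eq_comp (m : ℕ) (b : Fin m → ZMod 2) : xb m b = b ∘ antipodalClass m := rfl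

theorem antipodalClass_surjective (m : ℕ) : (antipodalClass m).Surjective := fun j =>
  ⟨⟨j.val, by omega⟩, Fin.ext (Nat.mod_eq_of_lt j.isLt)⟩

theorem tau_val (m : ℕ) (i : Fin (2*m)) :
    (tau m i).val = if i.val < m then i.val + m else i.val - m := by
  have := i.isLt
  split_ifs with h
  · exact Nat.mod_eq_of_lt (by omega)
  · show (i.val + m) % (2*m) = i.val - m
    rw [Nat.mod_eq_sub_mod (by omega), Nat.mod_eq_of_lt (by omega)]
    omega

theorem antipodalClass_val (m : ℕ) (i : Fin (2*m)) :
    (antipodalClass m i).val = if i.val < m then i.val else i.val - m := by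
  have := i.isLt
  split_ifs with h
  · exact Nat.mod_eq_of_lt h
  · show i.val % m = i.val - m
    rw [Nat.mod_eq_sub_mod (by omega), Nat.mod_eq_of_lt (by omega)]

theorem antipodalClass_eq_iff (m : ℕ) (a a' : Fin (2*m)) :
    antipodalClass m a = antipodalClass m a' ↔ a' = a ∨ a' = tau m a := by
  have := a.isLt
  have := a'.isLt
  simp only [Fin.ext_iff, antipodalClass_val, tau_val]
  split_ifs <;> omega

theorem antipodalClass_perm_eq_iff (m : ℕ) {σ : Equiv.Perm (Fin (2*m))}
    (hσ : ∀ i, σ (tau m i) = tau m (σ i)) (a a' : Fin (2*m)) :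
    antipodalClass m (σ a) = antipodalClass m (σ a') ↔
      antipodalClass m a = antipodalClass m a' := by
  simp only [antipodalClass_eq_iff, ← hσ, σ.injective.eq_iff]

theorem Pperm_ket (m : ℕ) (σ : Equiv.Perm (Fin (2*m))) (x : Bits m) :
    Pperm m σ (ket m x) = ket m (x ∘ σ.symm) := by
  funext y
  simp only [Pperm, ket, LinearMap.coe_mk, AddHom.coe_mk, ← Equiv.comp_symm_eq, Equiv.symm_symm]

/-- `ket0 m` and `ket1 m` are `codeword m 0` and `codeword m 1` by definition. -/
noncomputable def codeword (m : ℕ) (s : ZMod 2) : QState m :=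
  ((Real.sqrt (2 ^ (m-1)) : ℂ))⁻¹ •
    ∑ b ∈ Finset.univ.filter (fun b : Fin m → ZMod 2 => ∑ i, b i = s), ket m (xb m b)

theorem Pperm_codeword (m : ℕ) {σ : Equiv.Perm (Fin (2*m))}
    (hσ : ∀ i, σ (tau m i) = tau m (σ i)) (s : ZMod 2) :
    Pperm m σ (codeword m s) = codeword m s := by
  obtain ⟨ρ, hρ⟩ := (antipodalClass_surjective m).exists_perm_comp_eq σ.symm fun a a' => by
    rw [← antipodalClass_perm_eq_iff m hσ, σ.apply_symm_apply, σ.apply_symm_apply]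
  have hket : ∀ b, Pperm m σ (ket m (xb m b)) = ket m (xb m (b ∘ ρ)) := fun b => by
    rw [Pperm_ket, xb_eq_comp, xb_eq_comp, Function.comp_assoc, hρ, Function.comp_assoc]
  rw [codeword, map_smul, map_sum]
  simp only [hket]
  congr 1
  refine Finset.sum_equiv (ρ.symm.arrowCongr (Equiv.refl _)) (fun b => ?_) (fun _ _ => rfl)
  simp only [Finset.mem_filter, Finset.mem_univ, true_and]
  exact iff_of_eq (congrArg (· = s) (Equiv.sum_comp ρ b).symm)

theorem XI_polytope_symmetry_codespace_general (m : ℕ)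
    (σ : Equiv.Perm (Fin (2*m))) (hσ : ∀ i, σ (tau m i) = tau m (σ i)) :
    (∀ v ∈ (Submodule.span ℂ {ket0 m, ket1 m} : Submodule ℂ (QState m)),
        Pperm m σ v ∈ (Submodule.span ℂ {ket0 m, ket1 m} : Submodule ℂ (QState m))) ∧
    Pperm m σ (ket0 m) = ket0 m ∧
    Pperm m σ (ket1 m) = ket1 m := by
  have h0 : Pperm m σ (ket0 m) = ket0 m := Pperm_codeword m hσ 0
  have h1 : Pperm m σ (ket1 m) = ket1 m := Pperm_codeword m hσ 1
  have hfix : Set.EqOn (Pperm m σ) LinearMap.id (Submodule.span ℂ {ket0 m, ket1 m}) :=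
    LinearMap.eqOn_span' <| by rintro _ (rfl | rfl) <;> assumption
  exact ⟨fun v hv => (hfix hv).symm ▸ hv, h0, h1⟩

/-- (Full Polytope Symmetry, part 2) For any permutation `σ` of the qubits commuting
with the antipodal involution `τ`, the operator `P_σ` preserves the code space of the
X–I code `Ξ(2m)`; in fact it fixes both codewords `|0̄⟩` and `|1̄⟩`. -/
theorem XI_polytope_symmetry_codespace (m : ℕ) (hm : 2 ≤ m)
    (σ : Equiv.Perm (Fin (2*m))) (hσ : ∀ i, σ (tau m i) = tau m (σ i)) :
    (∀ v ∈ (Submodule.span ℂ {ket0 m, ket1 m} : Submodule ℂ (QState m)),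
        Pperm m σ v ∈ (Submodule.span ℂ {ket0 m, ket1 m} : Submodule ℂ (QState m))) ∧
    Pperm m σ (ket0 m) = ket0 m ∧
    Pperm m σ (ket1 m) = ket1 m :=
  XI_polytope_symmetry_codespace_general m σ hσ
end

section
/- In the ZMod 2 vector space of functions Fin (2m) → ZMod 2, the span of the Z-generator support vectors {e_i + e_{τ i} : i ∈ Fin (2m)} has dimension m, and the span of the X-generator support vectors {e_i + e_{τ i} + e_j + e_{τ j} : {i, τ i} ≠ {j, τ j}} has dimension m − 1; hence the X–I code Ξ(2m) has m independent Z-generators and m − 1 independent X-generators. -/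
open scoped BigOperators

/-- Support vectors of the Z-generators of `Ξ(2m)`: the indicators of the antipodal
pairs `{i, τ i}`, i.e. `e_i + e_{τ i}`. -/
def ZgenSupports (m : ℕ) : Set (Fin (2*m) → ZMod 2) :=
  {v | ∃ i : Fin (2*m), v = Pi.single i 1 + Pi.single (tau m i) 1}

/-- Support vectors of the X-generators of `Ξ(2m)`: the indicators of unions of two
distinct antipodal pairs, i.e. `e_i + e_{τ i} + e_j + e_{τ j}`. -/
def XgenSupports (m : ℕ) : Set (Fin (2*m) → ZMod 2) :=
  {v | ∃ i j : Fin (2*m), ({i, tau m i} : Finset (Fin (2*m))) ≠ {j, tau m j} ∧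
        v = Pi.single i 1 + Pi.single (tau m i) 1 + Pi.single j 1 + Pi.single (tau m j) 1}

/-!
Let `π : Fin (2m) → Fin m` be reduction mod `m`; its fibres are exactly the antipodal pairs. So
`e_i + e_{τ i}` is the pullback along `π` of the basis vector `e_{π i}` of `Fin m → ZMod 2`, and
`e_i + e_{τ i} + e_j + e_{τ j}` is the pullback of `e_{π i} - e_{π j}` (characteristic 2), where
the pairs differ iff `π i ≠ π j`. Pullback along a surjection is injective, so the two ranks are
those of the standard basis, `m`, and of the differences `e_k - e_l` (`k ≠ l`), which span the same
space as the `m - 1` independent vectors `e_k - e_{k₀}` (`k ≠ k₀`).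
-/

section SingleSubSingle

variable {R ι : Type*} [DecidableEq ι]

theorem linearIndependent_single_sub_single [Ring R] [Fintype ι] (i₀ : ι) :
    LinearIndependent R fun k : {k // k ≠ i₀} => (Pi.single k.1 1 - Pi.single i₀ 1 : ι → R) := by
  rw [Fintype.linearIndependent_iff]
  intro c hc k
  simpa [Pi.single_apply, k.2, Subtype.val_inj] using congrFun hc k

theorem span_single_sub_single_eq [Ring R] (i₀ : ι) :
    Submodule.span R {v : ι → R | ∃ i j, i ≠ j ∧ v = Pi.single i 1 - Pi.single j 1} =
      Submodule.span R
        (Set.range fun k : {k // k ≠ i₀} => (Pi.single k.1 1 - Pi.single i₀ 1 : ι → R)) := by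
  apply le_antisymm
  · have mem (i : ι) : (Pi.single i 1 - Pi.single i₀ 1 : ι → R) ∈ Submodule.span R
        (Set.range fun k : {k // k ≠ i₀} => (Pi.single k.1 1 - Pi.single i₀ 1 : ι → R)) := by
      by_cases hi : i = i₀
      · simp [hi]
      · exact Submodule.subset_span ⟨⟨i, hi⟩, rfl⟩
    rw [Submodule.span_le]
    rintro v ⟨i, j, -, rfl⟩
    rw [← sub_sub_sub_cancel_right _ _ (Pi.single i₀ 1)]
    exact sub_mem (mem i) (mem j)
  · rw [Submodule.span_le]
    rintro v ⟨k, rfl⟩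
    exact Submodule.subset_span ⟨k, i₀, k.2, rfl⟩

theorem finrank_span_single_sub_single [Field R] [Fintype ι] :
    Module.finrank R (Submodule.span R
      {v : ι → R | ∃ i j, i ≠ j ∧ v = Pi.single i 1 - Pi.single j 1}) = Fintype.card ι - 1 := by
  rcases isEmpty_or_nonempty ι with hι | ⟨⟨i₀⟩⟩
  · simp
  · rw [span_single_sub_single_eq i₀,
      finrank_span_eq_card (linearIndependent_single_sub_single i₀)]
    simp

end SingleSubSingle

theorem Fin.modNat_castLE {a n : ℕ} (h : n ≤ a * n) (k : Fin n) : (Fin.castLE h k).modNat = k :=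
  Fin.ext (Nat.mod_eq_of_lt k.isLt)

section Antipodal

variable {m : ℕ}

theorem val_tau (i : Fin (2*m)) : (tau m i).val = if i.val < m then i.val + m else i.val - m := by
  have hi := i.isLt
  show (i.val + m) % (2*m) = _
  split_ifs with h
  · exact Nat.mod_eq_of_lt (by omega)
  · rw [Nat.mod_eq_sub_mod (by omega), Nat.mod_eq_of_lt (by omega)]
    omega

theorem Fin.val_modNat_two_mul (i : Fin (2*m)) :
    i.modNat.val = if i.val < m then i.val else i.val - m := by
  have hi := i.isLt
  rw [Fin.coe_modNat]
  split_ifs with h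
  · exact Nat.mod_eq_of_lt h
  · rw [Nat.mod_eq_sub_mod (by omega), Nat.mod_eq_of_lt (by omega)]

theorem tau_tau (i : Fin (2*m)) : tau m (tau m i) = i := by
  have := i.isLt
  ext
  rw [val_tau, val_tau]
  split_ifs <;> omega

theorem tau_ne_self (i : Fin (2*m)) : tau m i ≠ i := by
  have := i.isLt
  rw [ne_eq, Fin.ext_iff, val_tau]
  split_ifs <;> omega

theorem modNat_eq_modNat_iff_eq_or_eq_tau {i j : Fin (2*m)} :
    j.modNat = i.modNat ↔ j = i ∨ j = tau m i := by
  have := i.isLt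
  have := j.isLt
  rw [Fin.ext_iff, Fin.ext_iff, Fin.ext_iff, Fin.val_modNat_two_mul, Fin.val_modNat_two_mul,
    val_tau]
  split_ifs <;> omega

theorem pair_tau_eq_pair_tau_iff {i j : Fin (2*m)} :
    ({i, tau m i} : Finset (Fin (2*m))) = {j, tau m j} ↔ i.modNat = j.modNat := by
  constructor
  · intro h
    have hi : i ∈ ({j, tau m j} : Finset (Fin (2*m))) := h ▸ Finset.mem_insert_self i _
    exact modNat_eq_modNat_iff_eq_or_eq_tau.2 (by simpa using hi)
  · intro h
    rcases modNat_eq_modNat_iff_eq_or_eq_tau.1 h with rfl | rfl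
    · rfl
    · rw [tau_tau, Finset.pair_comm]

end Antipodal

/-- The vectors constant on antipodal pairs: over `ZMod 2` this is `xb m`. -/
def pairLift (R : Type*) [Semiring R] (m : ℕ) : (Fin m → R) →ₗ[R] (Fin (2*m) → R) :=
  LinearMap.funLeft R R Fin.modNat

section PairLift

variable {R : Type*} [Semiring R] {m : ℕ}

theorem pairLift_injective : Function.Injective (pairLift R m) :=
  LinearMap.funLeft_injective_of_surjective _ _ _ fun k => ⟨_, Fin.modNat_castLE (by omega) k⟩

theorem single_add_single_tau (i : Fin (2*m)) :
    (Pi.single i 1 + Pi.single (tau m i) 1 : Fin (2*m) → R) =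
      pairLift R m (Pi.single i.modNat 1) := by
  ext j
  have hne := tau_ne_self i
  simp only [pairLift, LinearMap.funLeft_apply, Pi.add_apply, Pi.single_apply,
    modNat_eq_modNat_iff_eq_or_eq_tau]
  split_ifs <;> simp_all

end PairLift

theorem ZgenSupports_eq_image (m : ℕ) :
    ZgenSupports m = pairLift (ZMod 2) m '' Set.range (Pi.basisFun (ZMod 2) (Fin m)) := by
  ext v
  simp only [ZgenSupports, Set.mem_ofPred_eq, Set.mem_image, Set.mem_range, exists_exists_eq_and,
    Pi.basisFun_apply, single_add_single_tau]
  constructor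
  · rintro ⟨i, rfl⟩
    exact ⟨i.modNat, rfl⟩
  · rintro ⟨k, rfl⟩
    exact ⟨Fin.castLE (by omega) k, by rw [Fin.modNat_castLE]⟩

theorem pairLift_single_sub_single {m : ℕ} (i j : Fin (2*m)) :
    pairLift (ZMod 2) m (Pi.single i.modNat 1 - Pi.single j.modNat 1) =
      Pi.single i 1 + Pi.single (tau m i) 1 + Pi.single j 1 + Pi.single (tau m j) 1 := by
  rw [sub_eq_add_neg, ← Pi.single_neg, ZMod.neg_eq_self_mod_two, map_add,
    ← single_add_single_tau, ← single_add_single_tau, add_assoc _ (Pi.single j 1)]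

theorem XgenSupports_eq_image (m : ℕ) :
    XgenSupports m = pairLift (ZMod 2) m ''
      {v | ∃ k l, k ≠ l ∧ v = Pi.single k 1 - Pi.single l 1} := by
  ext v
  simp only [XgenSupports, Set.mem_ofPred_eq, Set.mem_image, ne_eq, pair_tau_eq_pair_tau_iff]
  constructor
  · rintro ⟨i, j, hij, rfl⟩
    exact ⟨_, ⟨i.modNat, j.modNat, hij, rfl⟩, pairLift_single_sub_single i j⟩
  · rintro ⟨_, ⟨k, l, hkl, rfl⟩, rfl⟩
    refine ⟨Fin.castLE (by omega) k, Fin.castLE (by omega) l, ?_, ?_⟩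
    · rwa [Fin.modNat_castLE, Fin.modNat_castLE]
    · rw [← pairLift_single_sub_single, Fin.modNat_castLE, Fin.modNat_castLE]

theorem XI_generator_ranks_general (m : ℕ) :
    Module.finrank (ZMod 2) (Submodule.span (ZMod 2) (ZgenSupports m)) = m ∧
    Module.finrank (ZMod 2) (Submodule.span (ZMod 2) (XgenSupports m)) = m - 1 := by
  constructor
  · rw [ZgenSupports_eq_image, Submodule.span_image, (Pi.basisFun (ZMod 2) (Fin m)).span_eq,
      Submodule.map_top, LinearMap.finrank_range_of_inj pairLift_injective, Module.finrank_fin_fun]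
  · rw [XgenSupports_eq_image, Submodule.span_image,
      ← (Submodule.equivMapOfInjective _ pairLift_injective _).finrank_eq,
      finrank_span_single_sub_single, Fintype.card_fin]

/-- In the `ZMod 2` vector space `Fin (2m) → ZMod 2`, the span of the Z-generator
support vectors has dimension `m` and the span of the X-generator support vectors
has dimension `m − 1`: the X–I code `Ξ(2m)` has `m` independent Z-generators and
`m − 1` independent X-generators. -/
theorem XI_generator_ranks (m : ℕ) (hm : 2 ≤ m) :
    Module.finrank (ZMod 2) (Submodule.span (ZMod 2) (ZgenSupports m)) = m ∧
    Module.finrank (ZMod 2) (Submodule.span (ZMod 2) (XgenSupports m)) = m - 1 :=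
  XI_generator_ranks_general m
end
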